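/- The function φ is even, φ(−1) = φ(1) = 1, and φ(x) > |x| for all x ∈ (−1,1). There exists c > 0 such that φ''(x) ≥ c for all x ∈ (−1,1) (uniform convexity). Moreover φ'(x) → −1 as x ↓ −1 and φ'(x) → 1 as x ↑ 1, so the graph of φ is tangent to the lines p₂ = −p₁ and p₂ = p₁ at (−1,1) and (1,1) respectively. -/

import Mathlib

open Real Set Metric Filter
open scoped RealInnerProductSpace

noncomputable section

/-- `w(x₁,x₂) = (x₂² − x₁²)/√(2(x₁²+x₂²))` (with value `0` at the origin, by `0`-division). -/
def w2 : EuclideanSpace ℝ (Fin 2) → ℝ :=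
  fun x => ((x 1) ^ 2 - (x 0) ^ 2) / Real.sqrt (2 * ((x 0) ^ 2 + (x 1) ^ 2))

/-- `Γ = ∇w(S¹)`. -/
def Ga : Set (EuclideanSpace ℝ (Fin 2)) :=
  {p | ∃ x : EuclideanSpace ℝ (Fin 2), ‖x‖ = 1 ∧ gradient w2 x = p}

/-- `Γ₁ = Γ ∩ {p₂ ≥ |p₁|}`. -/
def Ga1 : Set (EuclideanSpace ℝ (Fin 2)) :=
  Ga ∩ {p | |p 0| ≤ p 1}

def pt (a b : ℝ) : EuclideanSpace ℝ (Fin 2) := (WithLp.equiv 2 (Fin 2 → ℝ)).symm ![a, b]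

@[simp] lemma pt_zero (a b : ℝ) : pt a b 0 = a := rfl
@[simp] lemma pt_one (a b : ℝ) : pt a b 1 = b := rfl

lemma norm_pt (a b : ℝ) (h : a ^ 2 + b ^ 2 = 1) : ‖pt a b‖ = 1 := by
  rw [EuclideanSpace.norm_eq]
  simp only [Fin.sum_univ_two, pt_zero, pt_one, Real.norm_eq_abs, sq_abs]
  rw [h, Real.sqrt_one]

def P (i : Fin 2) : EuclideanSpace ℝ (Fin 2) →L[ℝ] ℝ := EuclideanSpace.proj i

lemma grad_w2 (c s : ℝ) (h : c ^ 2 + s ^ 2 = 1) :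
    HasGradientAt w2 (pt (-(c * (1 + 2 * s ^ 2)) / Real.sqrt 2)
      (s * (1 + 2 * c ^ 2) / Real.sqrt 2)) (pt c s) := by
  set y : EuclideanSpace ℝ (Fin 2) := pt c s with hy
  have h0 : HasFDerivAt (fun x : EuclideanSpace ℝ (Fin 2) => (x 0 : ℝ)) (P 0) y :=
    by exact (P 0).hasFDerivAt
  have h1 : HasFDerivAt (fun x : EuclideanSpace ℝ (Fin 2) => (x 1 : ℝ)) (P 1) y :=
    by exact (P 1).hasFDerivAt
  have hN : HasFDerivAt (fun x : EuclideanSpace ℝ (Fin 2) => (x 1 : ℝ) ^ 2 - (x 0 : ℝ) ^ 2)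
      (((y 1 : ℝ) • P 1 + (y 1 : ℝ) • P 1) - ((y 0 : ℝ) • P 0 + (y 0 : ℝ) • P 0)) y := by
    have := (h1.mul h1).sub (h0.mul h0)
    refine this.congr_of_eventuallyEq (Filter.Eventually.of_forall fun x => ?_)
    simp [pow_two]
  have hq : HasFDerivAt (fun x : EuclideanSpace ℝ (Fin 2) => 2 * ((x 0 : ℝ) ^ 2 + (x 1 : ℝ) ^ 2))
      ((2 : ℝ) • (((y 0 : ℝ) • P 0 + (y 0 : ℝ) • P 0) + ((y 1 : ℝ) • P 1 + (y 1 : ℝ) • P 1))) y := by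
    have := ((h0.mul h0).add (h1.mul h1)).const_mul (2 : ℝ)
    simpa [pow_two] using this
  have hqy : 2 * ((y 0 : ℝ) ^ 2 + (y 1 : ℝ) ^ 2) = 2 := by
    rw [hy]; simp only [pt_zero, pt_one]; rw [h]; ring
  have hginv : HasFDerivAt (fun x : EuclideanSpace ℝ (Fin 2) =>
      (Real.sqrt (2 * ((x 0 : ℝ) ^ 2 + (x 1 : ℝ) ^ 2)))⁻¹)
      ((-(1 / (2 * Real.sqrt 2)) / Real.sqrt 2 ^ 2) •
        ((2 : ℝ) • (((y 0 : ℝ) • P 0 + (y 0 : ℝ) • P 0) +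
          ((y 1 : ℝ) • P 1 + (y 1 : ℝ) • P 1)))) y := by
    have hd : HasDerivAt (fun t : ℝ => (Real.sqrt t)⁻¹)
        (-(1 / (2 * Real.sqrt 2)) / Real.sqrt 2 ^ 2) (2 * ((y 0 : ℝ) ^ 2 + (y 1 : ℝ) ^ 2)) := by
      rw [hqy]
      exact (Real.hasDerivAt_sqrt (by norm_num)).inv (by positivity)
    exact HasDerivAt.comp_hasFDerivAt (f := fun x : EuclideanSpace ℝ (Fin 2) => 2 * ((x 0 : ℝ) ^ 2 + (x 1 : ℝ) ^ 2)) y hd hq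
  have hw : HasFDerivAt w2
      (((y 1 : ℝ) ^ 2 - (y 0 : ℝ) ^ 2) • ((-(1 / (2 * Real.sqrt 2)) / Real.sqrt 2 ^ 2) •
        ((2 : ℝ) • (((y 0 : ℝ) • P 0 + (y 0 : ℝ) • P 0) +
          ((y 1 : ℝ) • P 1 + (y 1 : ℝ) • P 1)))) +
       (Real.sqrt (2 * ((y 0 : ℝ) ^ 2 + (y 1 : ℝ) ^ 2)))⁻¹ •
        (((y 1 : ℝ) • P 1 + (y 1 : ℝ) • P 1) - ((y 0 : ℝ) • P 0 + (y 0 : ℝ) • P 0))) y := by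
    have := hN.mul hginv
    have e : w2 = fun x : EuclideanSpace ℝ (Fin 2) =>
        ((x 1 : ℝ) ^ 2 - (x 0 : ℝ) ^ 2) * (Real.sqrt (2 * ((x 0 : ℝ) ^ 2 + (x 1 : ℝ) ^ 2)))⁻¹ := by
      funext x; simp [w2, div_eq_mul_inv]
    rw [e]
    exact this
  rw [hasGradientAt_iff_hasFDerivAt]
  refine hw.congr_fderiv (Eq.symm ?_)
  apply ContinuousLinearMap.ext
  intro v
  have hy0 : (y 0 : ℝ) = c := rfl
  have hy1 : (y 1 : ℝ) = s := rfl
  have h2 : Real.sqrt 2 ^ 2 = 2 := Real.sq_sqrt (by norm_num)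
  have h2ne : Real.sqrt 2 ≠ 0 := by positivity
  simp only [InnerProductSpace.toDual_apply_apply, PiLp.inner_apply, RCLike.inner_apply, conj_trivial,
    Fin.sum_univ_two, pt_zero, pt_one, ContinuousLinearMap.add_apply,
    ContinuousLinearMap.smul_apply, ContinuousLinearMap.sub_apply, P, PiLp.proj_apply,
    hy0, hy1, hqy, smul_eq_mul, h, Real.sqrt_one, h2]
  field_simp
  ring_nf
  linear_combination (- 2*c*(v 0 : ℝ) + 2*s*(v 1 : ℝ)) * h

/-- The parametrization of `Γ₁`: first coordinate. -/
def uu (θ : ℝ) : ℝ := -(Real.cos θ * (1 + 2 * Real.sin θ ^ 2)) / Real.sqrt 2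

/-- The parametrization of `Γ₁`: second coordinate. -/
def vv (θ : ℝ) : ℝ := Real.sin θ * (1 + 2 * Real.cos θ ^ 2) / Real.sqrt 2

lemma sqrt2_ne : Real.sqrt 2 ≠ 0 := by positivity
lemma sqrt2_sq : Real.sqrt 2 ^ 2 = 2 := Real.sq_sqrt (by norm_num)

lemma vv_add_uu (θ : ℝ) : vv θ + uu θ = (Real.sin θ - Real.cos θ) ^ 3 / Real.sqrt 2 := by
  have h := Real.sin_sq_add_cos_sq θ
  unfold vv uu
  rw [show Real.sin θ * (1 + 2 * Real.cos θ ^ 2) / Real.sqrt 2 +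
      -(Real.cos θ * (1 + 2 * Real.sin θ ^ 2)) / Real.sqrt 2 =
      (Real.sin θ * (1 + 2 * Real.cos θ ^ 2) - Real.cos θ * (1 + 2 * Real.sin θ ^ 2)) /
        Real.sqrt 2 by ring]
  congr 1
  linear_combination (Real.cos θ - Real.sin θ) * h

lemma vv_sub_uu (θ : ℝ) : vv θ - uu θ = (Real.sin θ + Real.cos θ) ^ 3 / Real.sqrt 2 := by
  have h := Real.sin_sq_add_cos_sq θ
  unfold vv uu
  rw [show Real.sin θ * (1 + 2 * Real.cos θ ^ 2) / Real.sqrt 2 -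
      -(Real.cos θ * (1 + 2 * Real.sin θ ^ 2)) / Real.sqrt 2 =
      (Real.sin θ * (1 + 2 * Real.cos θ ^ 2) + Real.cos θ * (1 + 2 * Real.sin θ ^ 2)) /
        Real.sqrt 2 by ring]
  congr 1
  linear_combination (-(Real.cos θ) - Real.sin θ) * h

lemma smc (θ : ℝ) : Real.sin θ - Real.cos θ = Real.sqrt 2 * Real.sin (θ - π/4) := by
  rw [Real.sin_sub, Real.cos_pi_div_four, Real.sin_pi_div_four,
    show Real.sqrt 2 * (Real.sin θ * (Real.sqrt 2 / 2) - Real.cos θ * (Real.sqrt 2 / 2)) =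
      (Real.sin θ - Real.cos θ) * (Real.sqrt 2 * Real.sqrt 2) / 2 by ring,
    Real.mul_self_sqrt (by norm_num : (0:ℝ) ≤ 2)]
  ring

lemma spc (θ : ℝ) : Real.sin θ + Real.cos θ = Real.sqrt 2 * Real.sin (θ + π/4) := by
  rw [Real.sin_add, Real.cos_pi_div_four, Real.sin_pi_div_four,
    show Real.sqrt 2 * (Real.sin θ * (Real.sqrt 2 / 2) + Real.cos θ * (Real.sqrt 2 / 2)) =
      (Real.sin θ + Real.cos θ) * (Real.sqrt 2 * Real.sqrt 2) / 2 by ring,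
    Real.mul_self_sqrt (by norm_num : (0:ℝ) ≤ 2)]
  ring

lemma smc_nonneg {θ : ℝ} (hθ : θ ∈ Icc (π/4) (3*π/4)) : 0 ≤ Real.sin θ - Real.cos θ := by
  rw [smc]
  have hπ := Real.pi_pos
  have : 0 ≤ Real.sin (θ - π/4) :=
    Real.sin_nonneg_of_nonneg_of_le_pi (by linarith [hθ.1]) (by linarith [hθ.2])
  positivity

lemma spc_nonneg {θ : ℝ} (hθ : θ ∈ Icc (π/4) (3*π/4)) : 0 ≤ Real.sin θ + Real.cos θ := by
  rw [spc]
  have hπ := Real.pi_pos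
  have : 0 ≤ Real.sin (θ + π/4) :=
    Real.sin_nonneg_of_nonneg_of_le_pi (by linarith [hθ.1]) (by linarith [hθ.2])
  positivity

lemma smc_pos {θ : ℝ} (hθ : θ ∈ Ioo (π/4) (3*π/4)) : 0 < Real.sin θ - Real.cos θ := by
  rw [smc]
  have hπ := Real.pi_pos
  have : 0 < Real.sin (θ - π/4) :=
    Real.sin_pos_of_pos_of_lt_pi (by linarith [hθ.1]) (by linarith [hθ.2])
  have h2 : 0 < Real.sqrt 2 := by positivity
  positivity

lemma spc_pos {θ : ℝ} (hθ : θ ∈ Ioo (π/4) (3*π/4)) : 0 < Real.sin θ + Real.cos θ := by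
  rw [spc]
  have hπ := Real.pi_pos
  have : 0 < Real.sin (θ + π/4) :=
    Real.sin_pos_of_pos_of_lt_pi (by linarith [hθ.1]) (by linarith [hθ.2])
  have h2 : 0 < Real.sqrt 2 := by positivity
  positivity

lemma sin_gt {θ : ℝ} (hθ : θ ∈ Ioo (π/4) (3*π/4)) : Real.sqrt 2 / 2 < Real.sin θ := by
  have hπ := Real.pi_pos
  have h1 : Real.sin θ = Real.cos (θ - π/2) := by
    rw [show θ - π/2 = -(π/2 - θ) by ring, Real.cos_neg, Real.cos_pi_div_two_sub]
  have h2 : Real.cos (θ - π/2) = Real.cos |θ - π/2| := (Real.cos_abs _).symm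
  have h3 : |θ - π/2| < π/4 := by
    rw [abs_lt]; constructor <;> [linarith [hθ.1]; linarith [hθ.2]]
  have h4 : Real.cos (π/4) < Real.cos |θ - π/2| := by
    apply Real.strictAntiOn_cos ⟨abs_nonneg _, by linarith⟩ ⟨by positivity, by linarith⟩ h3
  rw [h1, h2, ← Real.cos_pi_div_four]
  exact h4

lemma sin_pos' {θ : ℝ} (hθ : θ ∈ Ioo (π/4) (3*π/4)) : 0 < Real.sin θ := by
  have := sin_gt hθ
  have : (0:ℝ) < Real.sqrt 2 / 2 := by positivity
  linarith [sin_gt hθ]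

lemma two_sin_sq {θ : ℝ} (hθ : θ ∈ Ioo (π/4) (3*π/4)) : 0 < 2 * Real.sin θ ^ 2 - 1 := by
  have h1 := sin_gt hθ
  have h2 : (0:ℝ) < Real.sqrt 2 / 2 := by positivity
  nlinarith [sqrt2_sq]

lemma abs_uu_le {θ : ℝ} (hθ : θ ∈ Icc (π/4) (3*π/4)) : |uu θ| ≤ vv θ := by
  rw [abs_le]
  have h1 := vv_add_uu θ
  have h2 := vv_sub_uu θ
  have h3 := smc_nonneg hθ
  have h4 := spc_nonneg hθ
  have h5 : 0 ≤ (Real.sin θ - Real.cos θ) ^ 3 / Real.sqrt 2 := by positivity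
  have h6 : 0 ≤ (Real.sin θ + Real.cos θ) ^ 3 / Real.sqrt 2 := by positivity
  constructor <;> linarith

lemma abs_uu_lt {θ : ℝ} (hθ : θ ∈ Ioo (π/4) (3*π/4)) : |uu θ| < vv θ := by
  rw [abs_lt]
  have h1 := vv_add_uu θ
  have h2 := vv_sub_uu θ
  have h3 := smc_pos hθ
  have h4 := spc_pos hθ
  have h5 : 0 < (Real.sin θ - Real.cos θ) ^ 3 / Real.sqrt 2 := by positivity
  have h6 : 0 < (Real.sin θ + Real.cos θ) ^ 3 / Real.sqrt 2 := by positivity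
  constructor <;> linarith

lemma mem_Ga1 {θ : ℝ} (hθ : θ ∈ Icc (π/4) (3*π/4)) : pt (uu θ) (vv θ) ∈ Ga1 := by
  constructor
  · exact ⟨pt (Real.cos θ) (Real.sin θ), norm_pt _ _ (by
      rw [Real.cos_sq_add_sin_sq]),
      (grad_w2 (Real.cos θ) (Real.sin θ) (by rw [Real.cos_sq_add_sin_sq])).gradient⟩
  · simpa using abs_uu_le hθ

lemma uu_pi4 : uu (π/4) = -1 := by
  unfold uu
  rw [Real.cos_pi_div_four, Real.sin_pi_div_four, div_eq_iff sqrt2_ne]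
  linear_combination (-(Real.sqrt 2)/4) * (Real.mul_self_sqrt (by norm_num : (0:ℝ) ≤ 2))

lemma vv_pi4 : vv (π/4) = 1 := by
  unfold vv
  rw [Real.cos_pi_div_four, Real.sin_pi_div_four, div_eq_iff sqrt2_ne]
  linear_combination ((Real.sqrt 2)/4) * (Real.mul_self_sqrt (by norm_num : (0:ℝ) ≤ 2))

lemma cos_3pi4 : Real.cos (3*π/4) = -(Real.sqrt 2 / 2) := by
  rw [show 3*π/4 = π - π/4 by ring, Real.cos_pi_sub, Real.cos_pi_div_four]

lemma sin_3pi4 : Real.sin (3*π/4) = Real.sqrt 2 / 2 := by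
  rw [show 3*π/4 = π - π/4 by ring, Real.sin_pi_sub, Real.sin_pi_div_four]

lemma uu_3pi4 : uu (3*π/4) = 1 := by
  unfold uu
  rw [cos_3pi4, sin_3pi4, div_eq_iff sqrt2_ne]
  linear_combination ((Real.sqrt 2)/4) * (Real.mul_self_sqrt (by norm_num : (0:ℝ) ≤ 2))

lemma vv_3pi4 : vv (3*π/4) = 1 := by
  unfold vv
  rw [cos_3pi4, sin_3pi4, div_eq_iff sqrt2_ne]
  linear_combination ((Real.sqrt 2)/4) * (Real.mul_self_sqrt (by norm_num : (0:ℝ) ≤ 2))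

lemma uu_cont : Continuous uu := by
  unfold uu; fun_prop

lemma vv_cont : Continuous vv := by
  unfold vv; fun_prop

lemma uu_hasDeriv (θ : ℝ) :
    HasDerivAt uu (3 * Real.sin θ * (2 * Real.sin θ ^ 2 - 1) / Real.sqrt 2) θ := by
  have hc := Real.hasDerivAt_cos θ
  have hs := Real.hasDerivAt_sin θ
  have h1 : HasDerivAt (fun t => 1 + 2 * Real.sin t ^ 2)
      (2 * ((2 : ℕ) * Real.sin θ ^ 1 * Real.cos θ)) θ := ((hs.pow 2).const_mul 2).const_add 1
  have h2 := ((hc.mul h1).neg).div_const (Real.sqrt 2)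
  refine h2.congr_deriv (Eq.symm ?_)
  have h := Real.sin_sq_add_cos_sq θ
  field_simp
  ring_nf
  linear_combination (4*Real.sin θ) * h

lemma vv_hasDeriv (θ : ℝ) :
    HasDerivAt vv (3 * Real.cos θ * (2 * Real.cos θ ^ 2 - 1) / Real.sqrt 2) θ := by
  have hc := Real.hasDerivAt_cos θ
  have hs := Real.hasDerivAt_sin θ
  have h1 : HasDerivAt (fun t => 1 + 2 * Real.cos t ^ 2)
      (2 * ((2 : ℕ) * Real.cos θ ^ 1 * -Real.sin θ)) θ := ((hc.pow 2).const_mul 2).const_add 1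
  have h2 := (hs.mul h1).div_const (Real.sqrt 2)
  refine h2.congr_deriv (Eq.symm ?_)
  have h := Real.sin_sq_add_cos_sq θ
  field_simp
  ring_nf
  linear_combination (4*Real.cos θ) * h

lemma uu_strictMono : StrictMonoOn uu (Icc (π/4) (3*π/4)) := by
  apply strictMonoOn_of_deriv_pos (convex_Icc _ _) (uu_cont.continuousOn)
  intro x hx
  rw [interior_Icc] at hx
  rw [(uu_hasDeriv x).deriv]
  have h1 := sin_pos' hx
  have h2 := two_sin_sq hx
  positivity

lemma uu_sym (θ : ℝ) : uu (π - θ) = -uu θ := by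
  unfold uu
  rw [Real.cos_pi_sub, Real.sin_pi_sub]
  ring

lemma vv_sym (θ : ℝ) : vv (π - θ) = vv θ := by
  unfold vv
  rw [Real.cos_pi_sub, Real.sin_pi_sub]
  ring

lemma pi4_mem : π/4 ∈ Icc (π/4) (3*π/4) := by
  have := Real.pi_pos
  constructor <;> linarith

lemma pi34_mem : (3*π/4) ∈ Icc (π/4) (3*π/4) := by
  have := Real.pi_pos
  constructor <;> linarith

/-- surjectivity onto `Icc (-1) 1` -/
lemma uu_surj {x : ℝ} (hx : x ∈ Icc (-1 : ℝ) 1) :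
    ∃ θ ∈ Icc (π/4) (3*π/4), uu θ = x := by
  have := Real.pi_pos
  have h := intermediate_value_Icc (by linarith : π/4 ≤ 3*π/4) uu_cont.continuousOn
  rw [uu_pi4, uu_3pi4] at h
  obtain ⟨θ, hθ, hθx⟩ := h hx
  exact ⟨θ, hθ, hθx⟩

lemma uu_surj_Ioo {x : ℝ} (hx : x ∈ Ioo (-1 : ℝ) 1) :
    ∃ θ ∈ Ioo (π/4) (3*π/4), uu θ = x := by
  have := Real.pi_pos
  have h := intermediate_value_Ioo (by linarith : π/4 ≤ 3*π/4) uu_cont.continuousOn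
  rw [uu_pi4, uu_3pi4] at h
  obtain ⟨θ, hθ, hθx⟩ := h hx
  exact ⟨θ, hθ, hθx⟩

lemma uu_mem_Ioo {θ : ℝ} (hθ : θ ∈ Ioo (π/4) (3*π/4)) : uu θ ∈ Ioo (-1 : ℝ) 1 := by
  constructor
  · rw [← uu_pi4]
    exact uu_strictMono pi4_mem (Ioo_subset_Icc_self hθ) hθ.1
  · rw [← uu_3pi4]
    exact uu_strictMono (Ioo_subset_Icc_self hθ) pi34_mem hθ.2

/-- `φ` is even with `φ(±1) = 1` and `φ(x) > |x|` on `(−1,1)`; it is uniformly convex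
(`φ'' ≥ c > 0`), and `φ' → ∓1` at `∓1`, i.e. the graph is tangent to `p₂ = ∓p₁` at the cusps. -/
theorem statement7 (φ : ℝ → ℝ)
    (hφc : ContinuousOn φ (Set.Icc (-1) 1))
    (hφgraph : Ga1 = {p : EuclideanSpace ℝ (Fin 2) | p 0 ∈ Set.Icc (-1 : ℝ) 1 ∧ p 1 = φ (p 0)})
    (hφs : ContDiffOn ℝ (⊤ : ℕ∞) φ (Set.Ioo (-1) 1)) :
    (∀ x ∈ Set.Icc (-1 : ℝ) 1, φ (-x) = φ x) ∧
    φ (-1) = 1 ∧ φ 1 = 1 ∧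
    (∀ x ∈ Set.Ioo (-1 : ℝ) 1, |x| < φ x) ∧
    (∃ c > (0 : ℝ), ∀ x ∈ Set.Ioo (-1 : ℝ) 1, c ≤ iteratedDeriv 2 φ x) ∧
    Tendsto (deriv φ) (nhdsWithin (-1) (Set.Ioi (-1))) (nhds (-1)) ∧
    Tendsto (deriv φ) (nhdsWithin 1 (Set.Iio 1)) (nhds 1) := by
  have hπ := Real.pi_pos
  -- the key relation
  have hkey : ∀ θ ∈ Icc (π/4) (3*π/4), φ (uu θ) = vv θ := by
    intro θ hθ
    have hmem := mem_Ga1 hθ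
    rw [hφgraph] at hmem
    simpa using hmem.2.symm
  -- smoothness bookkeeping
  have hφinf : ContDiffOn ℝ (⊤ : ℕ∞) φ (Ioo (-1 : ℝ) 1) := hφs.of_le (by simp)
  have hψ : ContDiffOn ℝ (⊤ : ℕ∞) (deriv φ) (Ioo (-1 : ℝ) 1) :=
    ((contDiffOn_infty_iff_deriv_of_isOpen isOpen_Ioo).1 hφinf).2
  -- first derivative along the curve
  have hder : ∀ θ ∈ Ioo (π/4) (3*π/4), deriv φ (uu θ) = -Real.cos θ / Real.sin θ := by
    intro θ hθ
    have hx0 : uu θ ∈ Ioo (-1 : ℝ) 1 := uu_mem_Ioo hθ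
    have hφd : HasDerivAt φ (deriv φ (uu θ)) (uu θ) :=
      ((hφinf.contDiffAt (isOpen_Ioo.mem_nhds hx0)).differentiableAt (by simp)).hasDerivAt
    have hchain := hφd.comp θ (uu_hasDeriv θ)
    have heq : (φ ∘ uu) =ᶠ[nhds θ] vv := by
      filter_upwards [isOpen_Ioo.mem_nhds hθ] with t ht
      exact hkey t (Ioo_subset_Icc_self ht)
    have hvd : HasDerivAt vv (deriv φ (uu θ) * (3 * Real.sin θ * (2 * Real.sin θ ^ 2 - 1) /
        Real.sqrt 2)) θ := hchain.congr_of_eventuallyEq heq.symm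
    have E := hvd.unique (vv_hasDeriv θ)
    have hs0 : Real.sin θ ≠ 0 := ne_of_gt (sin_pos' hθ)
    have hq0 : (2 * Real.sin θ ^ 2 - 1) ≠ 0 := ne_of_gt (two_sin_sq hθ)
    have hpyth := Real.sin_sq_add_cos_sq θ
    rw [eq_div_iff hs0]
    field_simp [sqrt2_ne] at E
    have h5 : (deriv φ (uu θ) * Real.sin θ + Real.cos θ) * (3 * (2 * Real.sin θ ^ 2 - 1)) = 0 := by
      linear_combination 3 * E + 6 * Real.cos θ * hpyth
    rcases mul_eq_zero.mp h5 with h6 | h6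
    · linarith
    · exfalso; apply hq0; linarith
  -- second derivative along the curve
  have hder2 : ∀ θ ∈ Ioo (π/4) (3*π/4),
      deriv (deriv φ) (uu θ) = Real.sqrt 2 / (3 * Real.sin θ ^ 3 * (2 * Real.sin θ ^ 2 - 1)) := by
    intro θ hθ
    have hx0 : uu θ ∈ Ioo (-1 : ℝ) 1 := uu_mem_Ioo hθ
    have hψd : HasDerivAt (deriv φ) (deriv (deriv φ) (uu θ)) (uu θ) :=
      ((hψ.contDiffAt (isOpen_Ioo.mem_nhds hx0)).differentiableAt (by simp)).hasDerivAt
    have hchain := hψd.comp θ (uu_hasDeriv θ)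
    have heq : (deriv φ ∘ uu) =ᶠ[nhds θ] (fun t => -Real.cos t / Real.sin t) := by
      filter_upwards [isOpen_Ioo.mem_nhds hθ] with t ht
      exact hder t ht
    have hs0 : Real.sin θ ≠ 0 := ne_of_gt (sin_pos' hθ)
    have hA := (Real.hasDerivAt_cos θ).neg.div (Real.hasDerivAt_sin θ) hs0
    have hvd : HasDerivAt (fun t => -Real.cos t / Real.sin t)
        (deriv (deriv φ) (uu θ) * (3 * Real.sin θ * (2 * Real.sin θ ^ 2 - 1) / Real.sqrt 2)) θ :=
      hchain.congr_of_eventuallyEq heq.symm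
    have E := hvd.unique hA
    have hq0 : (2 * Real.sin θ ^ 2 - 1) ≠ 0 := ne_of_gt (two_sin_sq hθ)
    have hpyth := Real.sin_sq_add_cos_sq θ
    field_simp [sqrt2_ne, hs0, hq0] at E
    rw [Pi.neg_apply] at E
    rw [eq_div_iff (mul_ne_zero (mul_ne_zero (by norm_num) (pow_ne_zero 3 hs0)) hq0)]
    linear_combination E + Real.sqrt 2 * hpyth
  -- the second derivative bound
  have hbound : ∀ x ∈ Ioo (-1 : ℝ) 1, Real.sqrt 2 / 3 ≤ deriv (deriv φ) x := by
    intro x hx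
    obtain ⟨θ, hθ, rfl⟩ := uu_surj_Ioo hx
    rw [hder2 θ hθ]
    have h1 := sin_pos' hθ
    have h2 := two_sin_sq hθ
    have h3 := Real.sin_le_one θ
    have hX : 0 < 3 * Real.sin θ ^ 3 * (2 * Real.sin θ ^ 2 - 1) := by positivity
    have h4 : Real.sin θ ^ 3 ≤ 1 := pow_le_one₀ h1.le h3
    have h5 : 2 * Real.sin θ ^ 2 - 1 ≤ 1 := by nlinarith
    have hX3 : 3 * Real.sin θ ^ 3 * (2 * Real.sin θ ^ 2 - 1) ≤ 3 := by nlinarith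
    calc Real.sqrt 2 / 3 ≤ Real.sqrt 2 / (3 * Real.sin θ ^ 3 * (2 * Real.sin θ ^ 2 - 1)) :=
          div_le_div_of_nonneg_left (Real.sqrt_nonneg 2) hX hX3
      _ = _ := rfl
  -- strict monotonicity of deriv φ
  have hψmono : StrictMonoOn (deriv φ) (Ioo (-1 : ℝ) 1) := by
    apply strictMonoOn_of_deriv_pos (convex_Ioo _ _) (hψ.continuousOn)
    intro x hx
    rw [interior_Ioo] at hx
    have := hbound x hx
    have h2 : (0:ℝ) < Real.sqrt 2 / 3 := by positivity
    linarith
  -- deriv φ maps Ioo (-1) 1 into Ioo (-1) 1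
  have hψmaps : ∀ x ∈ Ioo (-1 : ℝ) 1, deriv φ x ∈ Ioo (-1 : ℝ) 1 := by
    intro x hx
    obtain ⟨θ, hθ, rfl⟩ := uu_surj_Ioo hx
    rw [hder θ hθ]
    have hs := sin_pos' hθ
    constructor
    · rw [lt_div_iff₀ hs]
      have := smc_pos hθ
      linarith
    · rw [div_lt_one hs]
      have := spc_pos hθ
      linarith
  refine ⟨?_, ?_, ?_, ?_, ?_, ?_, ?_⟩
  · -- evenness
    intro x hx
    obtain ⟨θ, hθ, rfl⟩ := uu_surj hx
    have hθ' : π - θ ∈ Icc (π/4) (3*π/4) := ⟨by linarith [hθ.2], by linarith [hθ.1]⟩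
    rw [← uu_sym θ, hkey _ hθ', hkey _ hθ, vv_sym]
  · have := hkey _ pi4_mem; rw [uu_pi4, vv_pi4] at this; exact this
  · have := hkey _ pi34_mem; rw [uu_3pi4, vv_3pi4] at this; exact this
  · -- |x| < φ x
    intro x hx
    obtain ⟨θ, hθ, rfl⟩ := uu_surj_Ioo hx
    rw [hkey _ (Ioo_subset_Icc_self hθ)]
    exact abs_uu_lt hθ
  · -- uniform convexity
    refine ⟨Real.sqrt 2 / 3, by positivity, ?_⟩
    intro x hx
    show Real.sqrt 2 / 3 ≤ iteratedDeriv (1 + 1) φ x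
    rw [iteratedDeriv_succ, iteratedDeriv_one]
    exact hbound x hx
  · -- tendsto at -1
    rw [tendsto_order]
    constructor
    · intro b hb
      filter_upwards [Ioo_mem_nhdsGT_of_mem (⟨le_refl _, by norm_num⟩ : (-1:ℝ) ∈ Ico (-1:ℝ) 1)]
        with x hx
      have := (hψmaps x hx).1
      linarith
    · intro b hb
      -- find θ1 near π/4 with -cos θ1 / sin θ1 < b
      have hcont : ContinuousAt (fun t => -Real.cos t / Real.sin t) (π/4) := by
        apply ContinuousAt.div
        · exact (Real.continuous_cos.neg).continuousAt
        · exact Real.continuous_sin.continuousAt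
        · rw [Real.sin_pi_div_four]; positivity
      have hval : (fun t => -Real.cos t / Real.sin t) (π/4) = -1 := by
        simp only [Real.cos_pi_div_four, Real.sin_pi_div_four]
        field_simp
      have h1 : ∀ᶠ t in nhdsWithin (π/4) (Ioi (π/4)), (-Real.cos t / Real.sin t) < b := by
        apply Filter.Tendsto.eventually_lt_const (by linarith : (-1:ℝ) < b)
        rw [← hval]
        exact hcont.continuousWithinAt.tendsto
      have h2 : ∀ᶠ t in nhdsWithin (π/4) (Ioi (π/4)), t ∈ Ioo (π/4) (3*π/4) :=
        Ioo_mem_nhdsGT_of_mem ⟨le_refl _, by linarith⟩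
      obtain ⟨θ1, hθ1b, hθ1mem⟩ := (h1.and h2).exists
      have hx0 : uu θ1 ∈ Ioo (-1 : ℝ) 1 := uu_mem_Ioo hθ1mem
      filter_upwards [Ioo_mem_nhdsGT_of_mem (⟨le_refl _, hx0.1⟩ : (-1:ℝ) ∈ Ico (-1:ℝ) (uu θ1))]
        with x hx
      have hxmem : x ∈ Ioo (-1 : ℝ) 1 := ⟨hx.1, lt_trans hx.2 hx0.2⟩
      have := hψmono hxmem hx0 hx.2
      rw [hder θ1 hθ1mem] at this
      linarith [hθ1b]
  · -- tendsto at 1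
    rw [tendsto_order]
    constructor
    · intro b hb
      -- find θ1 near 3π/4 with -cos θ1 / sin θ1 > b
      have hcont : ContinuousAt (fun t => -Real.cos t / Real.sin t) (3*π/4) := by
        apply ContinuousAt.div
        · exact (Real.continuous_cos.neg).continuousAt
        · exact Real.continuous_sin.continuousAt
        · rw [sin_3pi4]; positivity
      have hval : (fun t => -Real.cos t / Real.sin t) (3*π/4) = 1 := by
        simp only [cos_3pi4, sin_3pi4]
        field_simp
      have h1 : ∀ᶠ t in nhdsWithin (3*π/4) (Iio (3*π/4)), b < (-Real.cos t / Real.sin t) := by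
        apply Filter.Tendsto.eventually_const_lt (by linarith : b < (1:ℝ))
        rw [← hval]
        exact hcont.continuousWithinAt.tendsto
      have h2 : ∀ᶠ t in nhdsWithin (3*π/4) (Iio (3*π/4)), t ∈ Ioo (π/4) (3*π/4) :=
        Ioo_mem_nhdsLT_of_mem ⟨by linarith, le_refl _⟩
      obtain ⟨θ1, hθ1b, hθ1mem⟩ := (h1.and h2).exists
      have hx0 : uu θ1 ∈ Ioo (-1 : ℝ) 1 := uu_mem_Ioo hθ1mem
      filter_upwards [Ioo_mem_nhdsLT_of_mem (⟨hx0.2, le_refl _⟩ : (1:ℝ) ∈ Ioc (uu θ1) 1)]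
        with x hx
      have hxmem : x ∈ Ioo (-1 : ℝ) 1 := ⟨lt_trans hx0.1 hx.1, hx.2⟩
      have := hψmono hx0 hxmem hx.1
      rw [hder θ1 hθ1mem] at this
      linarith [hθ1b]
    · intro b hb
      filter_upwards [Ioo_mem_nhdsLT_of_mem (⟨by norm_num, le_refl _⟩ : (1:ℝ) ∈ Ioc (-1:ℝ) 1)]
        with x hx
      have := (hψmaps x hx).2
      linarith
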